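/- arXiv:2209.10649 — 3 statements merged into one kernel-verified Lean document; each statement's English description precedes it below -/
import Mathlib

section
/- Let (c_i) (i ≥ 1) be positive integers; for each i let s_{i,1},…,s_{i,c_i} be positive integers and set n_i := s_{i,1}+⋯+s_{i,c_i}; and let (k_i) be positive integers. Assume lim_{i→∞} lim_{j→∞} ∏_{l=i}^{i+j} n_l/(n_l+k_l) = 1 and lim_{i→∞} ∏_{l=1}^{i} c_l/(n_l+k_l) > 0 (all inner limits and the latter limit exist since the corresponding partial products are nonincreasing). For i ≤ m let V_{i,m} := ∏_{l=i}^{m} {1,…,c_l}. Then lim_{i→∞} lim_{j→∞} |{ v ∈ V_{i,i+j} : s_{l,v_l} = 1 for all i ≤ l ≤ i+j }| / (n_i·n_{i+1}⋯n_{i+j}) = 1, where the inner limits exist since the quotients are nonincreasing in j. -/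
/-!
The proportion factorises as `∏ l, a_l / n_l`, where `a_l` counts the indices `m` with
`s_{l,m} = 1`. Every other multiplicity is at least `2`, so `2 c_l ≤ n_l + a_l`, which gives
`1 - a_l / n_l ≤ 2 (1 - c_l / (n_l + k_l))`. Since `∏ c_l / (n_l + k_l)` has a positive limit,
`∑ (1 - c_l / (n_l + k_l))` converges, hence so does `∑ (1 - a_l / n_l)`, and the Weierstrass
inequality `∏ x_l ≥ 1 - ∑ (1 - x_l)` forces the tail products of `a_l / n_l` to tend to `1`.
-/

open Filter Finset
open scoped Classical

theorem Finset.card_filter_pi {ι : Type*} {β : ι → Type*} [DecidableEq ι] (s : Finset ι)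
    (t : ∀ i, Finset (β i)) (p : ∀ i, β i → Prop) [∀ i, DecidablePred (p i)] :
    #((s.pi t).filter fun v : (∀ i ∈ s, β i) => ∀ i (hi : i ∈ s), p i (v i hi)) =
      ∏ i ∈ s, #((t i).filter (p i)) := by
  rw [← card_pi]
  congr 1
  ext v
  simp only [Finset.mem_pi, mem_filter, forall_and]

theorem Finset.card_filter_eq_one_le_sum {α : Type*} (S : Finset α) (f : α → ℕ) :
    #(S.filter (f · = 1)) ≤ ∑ a ∈ S, f a :=
  calc #(S.filter (f · = 1)) = ∑ a ∈ S.filter (f · = 1), f a := by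
        rw [card_eq_sum_ones]
        exact sum_congr rfl fun a ha => (mem_filter.1 ha).2.symm
    _ ≤ ∑ a ∈ S, f a := sum_le_sum_of_subset (filter_subset _ _)

theorem Finset.two_mul_card_le_sum_add_card_filter_eq_one {α : Type*} (S : Finset α)
    (f : α → ℕ) (hf : ∀ a ∈ S, 0 < f a) :
    2 * #S ≤ ∑ a ∈ S, f a + #(S.filter (f · = 1)) := by
  have hone : ∑ a ∈ S.filter (f · = 1), f a = #(S.filter (f · = 1)) := by
    rw [card_eq_sum_ones]
    exact sum_congr rfl fun a ha => (mem_filter.1 ha).2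
  have htwo : 2 * #(S.filter (¬f · = 1)) ≤ ∑ a ∈ S.filter (¬f · = 1), f a := by
    rw [mul_comm, ← smul_eq_mul]
    refine card_nsmul_le_sum _ _ _ fun a ha => ?_
    have := hf a (mem_filter.1 ha).1
    have := (mem_filter.1 ha).2
    omega
  have hcard := card_filter_add_card_filter_not (s := S) (p := (f · = 1))
  rw [← sum_filter_add_sum_filter_not S (f · = 1), hone]
  omega

theorem one_sub_div_le_two_mul_one_sub_div {a c n k : ℕ} (h : 2 * c ≤ n + a) (ha : a ≤ n) :
    1 - (a : ℝ) / n ≤ 2 * (1 - c / (n + k)) := by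
  rcases Nat.eq_zero_or_pos n with rfl | hn
  · obtain rfl : c = 0 := by omega
    obtain rfl : a = 0 := by omega
    norm_num
  have hn' : (0 : ℝ) < n := by exact_mod_cast hn
  have hck : (c : ℝ) / (n + k) ≤ c / n := by gcongr; simp
  have h2c : 2 * ((c : ℝ) / n) ≤ 1 + a / n := by
    rw [mul_div_assoc', one_add_div hn'.ne', div_le_div_iff_of_pos_right hn']
    exact_mod_cast h
  linarith

theorem Finset.one_sub_sum_one_sub_le_prod {ι R : Type*} [CommRing R] [LinearOrder R]
    [IsStrictOrderedRing R] (s : Finset ι) {x : ι → R} (h0 : ∀ i ∈ s, 0 ≤ x i)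
    (h1 : ∀ i ∈ s, x i ≤ 1) : 1 - ∑ i ∈ s, (1 - x i) ≤ ∏ i ∈ s, x i := by
  induction s using Finset.induction_on with
  | empty => simp
  | insert a s ha ih =>
    rw [sum_insert ha, prod_insert ha]
    have h0' := fun i hi => h0 i (mem_insert_of_mem hi)
    have h1' := fun i hi => h1 i (mem_insert_of_mem hi)
    have hs := ih h0' h1'
    have hp : ∏ i ∈ s, x i ≤ 1 := prod_le_one h0' h1'
    nlinarith [mul_nonneg (sub_nonneg.2 (h1 a (mem_insert_self a s))) (sub_nonneg.2 hp)]

theorem summable_one_sub_of_tendsto_prod_range {r : ℕ → ℝ} {L : ℝ} (hr0 : ∀ l, 0 ≤ r l)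
    (hr1 : ∀ l, r l ≤ 1) (hL : 0 < L)
    (h : Tendsto (fun m => ∏ l ∈ range m, r l) atTop (nhds L)) :
    Summable fun l => 1 - r l := by
  set P : ℕ → ℝ := fun m => ∏ l ∈ range m, r l
  have hP_anti : Antitone P := antitone_nat_of_succ_le fun m => by
    simp only [P, prod_range_succ]
    exact mul_le_of_le_one_right (prod_nonneg fun l _ => hr0 l) (hr1 m)
  have hLP : ∀ m, L ≤ P m := hP_anti.le_of_tendsto h
  -- `L (1 - r l) ≤ P l (1 - r l) = P l - P (l + 1)`, so the partial sums telescope.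
  have hstep : ∀ l, 1 - r l ≤ (P l - P (l + 1)) / L := fun l => by
    rw [le_div_iff₀ hL]
    simp only [P, prod_range_succ]
    nlinarith [hLP l, hr1 l]
  refine summable_of_sum_range_le (c := 1 / L) (fun l => sub_nonneg.2 (hr1 l)) fun m => ?_
  calc ∑ l ∈ range m, (1 - r l) ≤ ∑ l ∈ range m, (P l - P (l + 1)) / L :=
        sum_le_sum fun l _ => hstep l
    _ = (P 0 - P m) / L := by rw [← sum_div, sum_range_sub']
    _ ≤ 1 / L := by
        gcongr
        simp only [P, range_zero, prod_empty]
        linarith [hLP m]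

theorem prod_Icc_one_eq_prod_range_succ {M : Type*} [CommMonoid M] (f : ℕ → M) (m : ℕ) :
    ∏ l ∈ Icc 1 m, f l = ∏ l ∈ range m, f (l + 1) := by
  rw [← Ico_add_one_right_eq_Icc, prod_Ico_eq_prod_range, Nat.add_sub_cancel]
  simp only [add_comm 1]

section TailProduct

variable {x : ℕ → ℝ}

theorem antitone_prod_Icc_tail (hx0 : ∀ l, 0 ≤ x l) (hx1 : ∀ l, x l ≤ 1) (i : ℕ) :
    Antitone fun j => ∏ l ∈ Icc i (i + j), x l :=
  fun _ _ hj => prod_le_prod_of_subset_of_le_one (Icc_subset_Icc_right (by omega))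
    (fun l _ => hx0 l) fun l _ _ => hx1 l

theorem bddBelow_prod_Icc_tail (hx0 : ∀ l, 0 ≤ x l) (i : ℕ) :
    BddBelow (Set.range fun j => ∏ l ∈ Icc i (i + j), x l) :=
  ⟨0, by rintro _ ⟨j, rfl⟩; exact prod_nonneg fun l _ => hx0 l⟩

theorem tendsto_prod_Icc_tail_iInf (hx0 : ∀ l, 0 ≤ x l) (hx1 : ∀ l, x l ≤ 1) (i : ℕ) :
    Tendsto (fun j => ∏ l ∈ Icc i (i + j), x l) atTop
      (nhds (⨅ j, ∏ l ∈ Icc i (i + j), x l)) :=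
  tendsto_atTop_ciInf (antitone_prod_Icc_tail hx0 hx1 i) (bddBelow_prod_Icc_tail hx0 i)

theorem tendsto_iInf_prod_Icc_tail_one (hx0 : ∀ l, 0 ≤ x l) (hx1 : ∀ l, x l ≤ 1)
    (hsum : Summable fun l => 1 - x l) :
    Tendsto (fun i => ⨅ j, ∏ l ∈ Icc i (i + j), x l) atTop (nhds 1) := by
  have hlower : ∀ i, 1 - ∑' l, (1 - x (l + i)) ≤ ⨅ j, ∏ l ∈ Icc i (i + j), x l :=
    fun i => le_ciInf fun j => calc
      1 - ∑' l, (1 - x (l + i)) ≤ 1 - ∑ l ∈ Icc i (i + j), (1 - x l) := by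
        gcongr
        rw [← Ico_add_one_right_eq_Icc, sum_Ico_eq_sum_range, show i + j + 1 - i = j + 1 by omega]
        simp only [add_comm i]
        exact ((summable_nat_add_iff i).2 hsum).sum_le_tsum _ fun l _ => sub_nonneg.2 (hx1 _)
      _ ≤ ∏ l ∈ Icc i (i + j), x l :=
        one_sub_sum_one_sub_le_prod _ (fun l _ => hx0 l) fun l _ => hx1 l
  have hupper : ∀ i, ⨅ j, ∏ l ∈ Icc i (i + j), x l ≤ 1 := fun i =>
    (ciInf_le (bddBelow_prod_Icc_tail hx0 i) 0).trans
      (prod_le_one (fun l _ => hx0 l) fun l _ => hx1 l)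
  refine tendsto_of_tendsto_of_tendsto_of_le_of_le ?_ tendsto_const_nhds hlower hupper
  simpa using (tendsto_sum_nat_add fun l => 1 - x l).const_sub 1

end TailProduct

theorem villadsen_multiplicity_one_proportion_general
    (c k : ℕ → ℕ) (s : ℕ → ℕ → ℕ) (n : ℕ → ℕ)
    (hs : ∀ i j, 1 ≤ i → j ∈ Finset.Icc 1 (c i) → 0 < s i j)
    (hn : ∀ i, n i = ∑ j ∈ Finset.Icc 1 (c i), s i j)
    (L : ℝ) (hL : 0 < L)
    (hprod : Tendsto (fun i => ∏ l ∈ Finset.Icc 1 i, (c l : ℝ) / ((n l : ℝ) + k l))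
      atTop (nhds L)) :
    ∃ u : ℕ → ℝ,
      (∀ i, Tendsto (fun j =>
          (((((Finset.Icc i (i + j)).pi fun l => Finset.Icc 1 (c l)).filter
              fun v => ∀ l (hl : l ∈ Finset.Icc i (i + j)), s l (v l hl) = 1).card : ℝ) /
            ∏ l ∈ Finset.Icc i (i + j), (n l : ℝ)))
        atTop (nhds (u i))) ∧
      Tendsto u atTop (nhds 1) := by
  set a : ℕ → ℕ := fun l => #((Icc 1 (c l)).filter (s l · = 1))
  set x : ℕ → ℝ := fun l => (a l : ℝ) / n l
  have ha_le : ∀ l, a l ≤ n l := fun l => hn l ▸ card_filter_eq_one_le_sum _ _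
  have h2c : ∀ l, 1 ≤ l → 2 * c l ≤ n l + a l := fun l hl => by
    simpa [hn l] using two_mul_card_le_sum_add_card_filter_eq_one _ (s l) fun m hm => hs l m hl hm
  have hx0 : ∀ l, 0 ≤ x l := fun l => by positivity
  have hx1 : ∀ l, x l ≤ 1 := fun l =>
    div_le_one_of_le₀ (by exact_mod_cast ha_le l) (by positivity)
  have hr1 : ∀ l, 1 ≤ l → (c l : ℝ) / (n l + k l) ≤ 1 := fun l hl => by
    have := h2c l hl
    have := ha_le l
    exact div_le_one_of_le₀ (by exact_mod_cast (by omega : c l ≤ n l + k l)) (by positivity)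
  have hsum : Summable fun l => 1 - x l := by
    have hr : Summable fun l => 1 - (c (l + 1) : ℝ) / (n (l + 1) + k (l + 1)) :=
      summable_one_sub_of_tendsto_prod_range (fun l => by positivity) (fun l => hr1 _ l.succ_pos)
        hL (by simpa only [prod_Icc_one_eq_prod_range_succ] using hprod)
    refine (summable_nat_add_iff 1).1 ((hr.mul_left 2).of_nonneg_of_le
      (fun l => sub_nonneg.2 (hx1 _)) fun l => ?_)
    exact one_sub_div_le_two_mul_one_sub_div (h2c _ l.succ_pos) (ha_le _)
  refine ⟨fun i => ⨅ j, ∏ l ∈ Icc i (i + j), x l, fun i => ?_,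
    tendsto_iInf_prod_Icc_tail_one hx0 hx1 hsum⟩
  refine (tendsto_prod_Icc_tail_iInf hx0 hx1 i).congr fun j => ?_
  rw [card_filter_pi _ _ fun l m => s l m = 1, Nat.cast_prod, ← prod_div_distrib]

/-- In the Villadsen construction, almost all coordinate projections of the
composed connecting maps occur with multiplicity one: the proportion (weighted by
multiplicities, i.e. relative to `n_i ⋯ n_{i+j}`) of multi-indices `v` all of whose
multiplicities `s_{l, v_l}` equal `1` tends to `1`. -/
theorem villadsen_multiplicity_one_proportion
    (c k : ℕ → ℕ) (s : ℕ → ℕ → ℕ) (n : ℕ → ℕ)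
    (hc : ∀ i, 1 ≤ i → 0 < c i) (hk : ∀ i, 1 ≤ i → 0 < k i)
    (hs : ∀ i j, 1 ≤ i → j ∈ Finset.Icc 1 (c i) → 0 < s i j)
    (hn : ∀ i, n i = ∑ j ∈ Finset.Icc 1 (c i), s i j)
    (t : ℕ → ℝ)
    (ht : ∀ i, Tendsto (fun j => ∏ l ∈ Finset.Icc i (i + j), (n l : ℝ) / ((n l : ℝ) + k l))
      atTop (nhds (t i)))
    (ht1 : Tendsto t atTop (nhds 1))
    (L : ℝ) (hL : 0 < L)
    (hprod : Tendsto (fun i => ∏ l ∈ Finset.Icc 1 i, (c l : ℝ) / ((n l : ℝ) + k l))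
      atTop (nhds L)) :
    ∃ u : ℕ → ℝ,
      (∀ i, Tendsto (fun j =>
          (((((Finset.Icc i (i + j)).pi fun l => Finset.Icc 1 (c l)).filter
              fun v => ∀ l (hl : l ∈ Finset.Icc i (i + j)), s l (v l hl) = 1).card : ℝ) /
            ∏ l ∈ Finset.Icc i (i + j), (n l : ℝ)))
        atTop (nhds (u i))) ∧
      Tendsto u atTop (nhds 1) :=
  villadsen_multiplicity_one_proportion_general c k s n hs hn L hL hprod
end

section
/- In the Villadsen trace setup: if (μ_i)_{i≥1} ∈ T and there exists N such that μ_i is a Dirac measure for all i ≥ N, then (μ_i) is an extreme point of T; that is, whenever 0 < α < 1 and (ν_i), (ν'_i) ∈ T satisfy μ_i = α·ν_i + (1−α)·ν'_i (as Borel measures) for every i, then ν_i = ν'_i = μ_i for all i. -/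
open MeasureTheory
open scoped ENNReal

lemma dirac_extreme_aux {Ω : Type*} [MeasurableSpace Ω] (x : Ω)
    (α : ℝ≥0∞) (hα0 : 0 < α) (hα1 : α < 1)
    (ν ν' : Measure Ω) [IsProbabilityMeasure ν] [IsProbabilityMeasure ν']
    (h : Measure.dirac x = α • ν + (1 - α) • ν') :
    ν = Measure.dirac x ∧ ν' = Measure.dirac x := by
  have hα1' : 0 < 1 - α := tsub_pos_of_lt hα1
  have hzero : ∀ A : Set Ω, MeasurableSet A → x ∉ A → ν A = 0 ∧ ν' A = 0 := by
    intro A hA hx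
    have h0 : (Measure.dirac x) A = 0 := by
      rw [Measure.dirac_apply' _ hA]; simp [hx]
    rw [h] at h0
    simp only [Measure.add_apply, Measure.smul_apply, smul_eq_mul] at h0
    obtain ⟨h1, h2⟩ := add_eq_zero.mp h0
    exact ⟨(mul_eq_zero.mp h1).resolve_left hα0.ne',
      (mul_eq_zero.mp h2).resolve_left hα1'.ne'⟩
  have key : ∀ (m : Measure Ω), IsProbabilityMeasure m →
      (∀ A : Set Ω, MeasurableSet A → x ∉ A → m A = 0) → m = Measure.dirac x := by
    intro m hmp hm
    ext A hA
    rw [Measure.dirac_apply' _ hA]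
    by_cases hx : x ∈ A
    · rw [Set.indicator_of_mem hx, Pi.one_apply]
      exact (prob_compl_eq_zero_iff hA).mp (hm Aᶜ hA.compl (by simp [hx]))
    · rw [Set.indicator_of_notMem hx]
      exact hm A hA hx
  exact ⟨key ν ‹_› fun A hA hx => (hzero A hA hx).1,
    key ν' ‹_› fun A hA hx => (hzero A hA hx).2⟩

/-- Lemma 5.2, `extrem`, of the paper. In the Villadsen trace inverse
system, a compatible sequence of probability measures which is eventually Dirac is an
extreme point of the trace simplex. Here `Y i = X^{d i}` is realized as `Fin (d i) → X`,
the `j`-th coordinate projection `Y (i+1) = (Y i)^{c i} → Y i` is realized via the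
identification `finProdFinEquiv : Fin (d i) × Fin (c i) ≃ Fin (d i * c i)`, and
`θ i μ = (1/n_i) ∑_j s_{i,j} (π_j)_* μ` with `n i = ∑_j s i j`. -/
theorem villadsen_eventually_dirac_is_extreme
    (X : Type*) [TopologicalSpace X] [CompactSpace X] [TopologicalSpace.MetrizableSpace X]
    [MeasurableSpace X] [BorelSpace X]
    (c : ℕ → ℕ) (hc : ∀ i, 0 < c i)
    (s : ∀ i, Fin (c i) → ℕ) (hs : ∀ i j, 0 < s i j)
    (d : ℕ → ℕ) (hd0 : d 0 = 1) (hd : ∀ i, d (i + 1) = d i * c i)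
    (θ : ∀ i, Measure (Fin (d (i + 1)) → X) → Measure (Fin (d i) → X))
    (hθ : ∀ i μ, θ i μ =
      ((∑ j, s i j : ℕ) : ℝ≥0∞)⁻¹ •
        ∑ j : Fin (c i), (s i j : ℝ≥0∞) •
          Measure.map (fun (y : Fin (d (i + 1)) → X) (m : Fin (d i)) =>
            y (Fin.cast (hd i).symm (finProdFinEquiv (m, j)))) μ)
    (μ : ∀ i, Measure (Fin (d i) → X))
    (hμprob : ∀ i, IsProbabilityMeasure (μ i))
    (hμ : ∀ i, θ i (μ (i + 1)) = μ i)
    (N : ℕ) (hdirac : ∀ i, N ≤ i → ∃ x, μ i = Measure.dirac x)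
    (α : ℝ≥0∞) (hα0 : 0 < α) (hα1 : α < 1)
    (ν ν' : ∀ i, Measure (Fin (d i) → X))
    (hνprob : ∀ i, IsProbabilityMeasure (ν i)) (hν'prob : ∀ i, IsProbabilityMeasure (ν' i))
    (hνcomp : ∀ i, θ i (ν (i + 1)) = ν i) (hν'comp : ∀ i, θ i (ν' (i + 1)) = ν' i)
    (hconv : ∀ i, μ i = α • ν i + (1 - α) • ν' i) :
    ∀ i, ν i = μ i ∧ ν' i = μ i := by
  have base : ∀ i, N ≤ i → ν i = μ i ∧ ν' i = μ i := by
    intro i hi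
    obtain ⟨x, hx⟩ := hdirac i hi
    have h := hconv i
    rw [hx] at h
    haveI := hνprob i; haveI := hν'prob i
    obtain ⟨h1, h2⟩ := dirac_extreme_aux x α hα0 hα1 (ν i) (ν' i) h
    exact ⟨h1.trans hx.symm, h2.trans hx.symm⟩
  have step : ∀ i, (ν (i+1) = μ (i+1) ∧ ν' (i+1) = μ (i+1)) →
      ν i = μ i ∧ ν' i = μ i := by
    rintro i ⟨h1, h2⟩
    exact ⟨by rw [← hνcomp i, h1, hμ i], by rw [← hν'comp i, h2, hμ i]⟩
  have all : ∀ k i, i + k = N → ν i = μ i ∧ ν' i = μ i := by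
    intro k
    induction k with
    | zero => intro i hi; exact base i (by omega)
    | succ k ih => intro i hi; exact step i (ih (i+1) (by omega))
  intro i
  rcases le_or_gt N i with h | h
  · exact base i h
  · exact all (N - i) i (by omega)
end

section
/- Let (n_i), (k^E_i), (k^F_i) (i ≥ 1) be sequences of positive integers. Set Q^E_i := ∏_{l=1}^{i}(n_l + k^E_l) and Q^F_i := ∏_{l=1}^{i}(n_l + k^F_l), and let t^E_i := lim_{j→∞} ∏_{l=i}^{i+j} n_l/(n_l + k^E_l) and t^F_i := lim_{j→∞} ∏_{l=i}^{i+j} n_l/(n_l + k^F_l) (these limits exist since the partial products are nonincreasing in j). Assume: (i) lim_{i→∞} t^E_i = 1 and lim_{i→∞} t^F_i = 1; (ii) for every i there is j with Q^E_i dividing Q^F_j, and for every i there is j with Q^F_i dividing Q^E_j; (iii) lim_{i→∞} Q^E_i / Q^F_i = 1. Then for every δ > 0 and every N ∈ ℕ: there exist i_1 > i_1' ≥ N such that 1 − t^E_{i_1'} < δ, Q^E_{i_1'−1} divides Q^F_{i_1−1}, and (Q^F_{i_1'−1}/Q^E_{i_1'−1}) · (∏_{l=i_1'}^{i_1−1}(n_l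 + k^F_l) / ∏_{l=i_1'}^{i_1−1} n_l) > 1; and there exist i_2 > i_2' ≥ N such that 1 − t^F_{i_2'} < δ, Q^F_{i_2'−1} divides Q^E_{i_2−1}, and (Q^E_{i_2'−1}/Q^F_{i_2'−1}) · (∏_{l=i_2'}^{i_2−1}(n_l + k^E_l) / ∏_{l=i_2'}^{i_2−1} n_l) > 1. -/
/-!
Splitting the partial products at `i`, the ratio `Q^E_p / Q^F_p` equals
`Q^E_{i-1} / Q^F_{i-1}` times `∏_{l=i}^{p} n_l/(n_l+k^F_l)` divided by `∏_{l=i}^{p} n_l/(n_l+k^E_l)`;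
letting `p → ∞` in (iii) gives `Q^E_{i-1} / Q^F_{i-1} · t^F_i = t^E_i`. So the quantity that must
exceed `1` tends to `1 / t^E_{i'}` as `i → ∞`, and `t^E_{i'} < 1` because every factor
`n_l/(n_l+k^E_l)` is `< 1`. It remains to take `i'` with `t^E_{i'}` near `1` and then `i` large
enough for this and for the divisibility (ii); the other half is symmetric.
-/

open Filter Finset

theorem Finset.prod_Icc_one_mul_prod_Icc_succ {M : Type*} [CommMonoid M] (f : ℕ → M) {m p : ℕ}
    (hmp : m ≤ p) : (∏ l ∈ Icc 1 m, f l) * ∏ l ∈ Icc (m + 1) p, f l = ∏ l ∈ Icc 1 p, f l := by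
  simpa only [← Icc_add_one_left_eq_Ioc, zero_add] using
    prod_Ioc_consecutive f (Nat.zero_le m) hmp

theorem le_of_tendsto_prod_Icc {a : ℕ → ℝ} (ha₀ : ∀ l, 0 ≤ a l) (ha₁ : ∀ l, a l ≤ 1) {i : ℕ}
    {t : ℝ} (ht : Tendsto (fun j => ∏ l ∈ Icc i (i + j), a l) atTop (nhds t)) : t ≤ a i := by
  have hanti : Antitone fun j => ∏ l ∈ Icc i (i + j), a l := by
    refine antitone_nat_of_succ_le fun j => ?_
    rw [← add_assoc, prod_Icc_succ_top (by omega)]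
    exact mul_le_of_le_one_right (prod_nonneg fun l _ => ha₀ l) (ha₁ _)
  simpa using hanti.le_of_tendsto ht 0

theorem natCast_div_natCast_add_mem_Icc (n k : ℕ) :
    (n : ℝ) / (n + k) ∈ Set.Icc 0 1 :=
  ⟨by positivity, div_le_one_of_le₀ (by simp) (by positivity)⟩

theorem div_mul_prod_div_eq {K : Type*} [Field K] (w x y : ℕ → K) {m p : ℕ} (hmp : m ≤ p)
    (hx : ∀ l ∈ Icc (m + 1) p, x l ≠ 0) :
    (∏ l ∈ Icc 1 p, x l) / (∏ l ∈ Icc 1 p, y l) * ∏ l ∈ Icc (m + 1) p, w l / x l =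
      (∏ l ∈ Icc 1 m, x l) / (∏ l ∈ Icc 1 m, y l) * ∏ l ∈ Icc (m + 1) p, w l / y l := by
  have hX : ∏ l ∈ Icc (m + 1) p, x l ≠ 0 := prod_ne_zero_iff.mpr hx
  rw [← prod_Icc_one_mul_prod_Icc_succ x hmp, ← prod_Icc_one_mul_prod_Icc_succ y hmp,
    prod_div_distrib, prod_div_distrib]
  field_simp

theorem div_mul_eq_of_tendsto_prod_Icc (w x y : ℕ → ℝ) (m : ℕ) (hx : ∀ l, m < l → x l ≠ 0)
    {tx ty : ℝ}
    (htx : Tendsto (fun j => ∏ l ∈ Icc (m + 1) (m + 1 + j), w l / x l) atTop (nhds tx))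
    (hty : Tendsto (fun j => ∏ l ∈ Icc (m + 1) (m + 1 + j), w l / y l) atTop (nhds ty))
    (hratio : Tendsto (fun p => (∏ l ∈ Icc 1 p, x l) / ∏ l ∈ Icc 1 p, y l) atTop (nhds 1)) :
    (∏ l ∈ Icc 1 m, x l) / (∏ l ∈ Icc 1 m, y l) * ty = tx := by
  have hshift := hratio.comp (tendsto_atTop_mono (Nat.le_add_left · (m + 1)) tendsto_id)
  have hlhs := hshift.mul htx
  rw [one_mul] at hlhs
  refine tendsto_nhds_unique ?_ hlhs
  refine (hty.const_mul _).congr fun j => ?_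
  exact (div_mul_prod_div_eq w x y (by omega) fun l hl => hx l (by simp at hl; omega)).symm

/-- One of the two symmetric halves of Definition 4.4 of the paper, with `k`, `k'`, `t` in the
roles of `k^E`, `k^F`, `t^E`. -/
def SufficientlyCloseAt (n k k' : ℕ → ℕ) (t : ℕ → ℝ) (δ : ℝ) (N : ℕ) : Prop :=
  ∃ i' i : ℕ, N ≤ i' ∧ i' < i ∧ 1 - t i' < δ ∧
    ((∏ l ∈ Icc 1 (i' - 1), (n l + k l)) ∣ ∏ l ∈ Icc 1 (i - 1), (n l + k' l)) ∧
    1 < ((∏ l ∈ Icc 1 (i' - 1), ((n l : ℝ) + k' l)) /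
          ∏ l ∈ Icc 1 (i' - 1), ((n l : ℝ) + k l)) *
        ((∏ l ∈ Icc i' (i - 1), ((n l : ℝ) + k' l)) /
          ∏ l ∈ Icc i' (i - 1), (n l : ℝ))

theorem sufficientlyCloseAt_of_tendsto (n k k' : ℕ → ℕ) (hn : ∀ i, 1 ≤ i → 0 < n i)
    (hk : ∀ i, 1 ≤ i → 0 < k i) (t t' : ℕ → ℝ)
    (ht : ∀ i, Tendsto (fun j => ∏ l ∈ Icc i (i + j), (n l : ℝ) / ((n l : ℝ) + k l))
      atTop (nhds (t i)))
    (ht' : ∀ i, Tendsto (fun j => ∏ l ∈ Icc i (i + j), (n l : ℝ) / ((n l : ℝ) + k' l))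
      atTop (nhds (t' i)))
    (ht1 : Tendsto t atTop (nhds 1))
    (hdvd : ∀ i, ∃ j, (∏ l ∈ Icc 1 i, (n l + k l)) ∣ ∏ l ∈ Icc 1 j, (n l + k' l))
    (hratio : Tendsto (fun i =>
        (∏ l ∈ Icc 1 i, ((n l : ℝ) + k l)) / ∏ l ∈ Icc 1 i, ((n l : ℝ) + k' l))
      atTop (nhds 1))
    {δ : ℝ} (hδ : 0 < δ) (N : ℕ) : SufficientlyCloseAt n k k' t δ N := by
  obtain ⟨m, ⟨hδm, htm⟩, hNm⟩ : ∃ m, (1 - δ < t (m + 1) ∧ 0 < t (m + 1)) ∧ N ≤ m :=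
    (((ht1.comp (tendsto_add_atTop_nat 1)).eventually
      ((eventually_gt_nhds (by linarith)).and (eventually_gt_nhds one_pos))).and
      (eventually_ge_atTop N)).exists
  have hkey : (∏ l ∈ Icc 1 m, ((n l : ℝ) + k l)) / (∏ l ∈ Icc 1 m, ((n l : ℝ) + k' l)) *
      t' (m + 1) = t (m + 1) :=
    div_mul_eq_of_tendsto_prod_Icc (fun l => n l) _ _ m
      (fun l hl => by have := hn l (by omega); positivity) (ht (m + 1)) (ht' (m + 1)) hratio
  have ht'm : t' (m + 1) ≠ 0 := by rintro h; rw [h, mul_zero] at hkey; linarith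
  have htm1 : t (m + 1) < 1 := by
    refine (le_of_tendsto_prod_Icc (fun l => (natCast_div_natCast_add_mem_Icc _ _).1)
      (fun l => (natCast_div_natCast_add_mem_Icc _ _).2) (ht (m + 1))).trans_lt ?_
    have := hk (m + 1) (by omega)
    rw [div_lt_one (by positivity)]
    exact_mod_cast Nat.lt_add_of_pos_right this
  have hlim : Tendsto (fun j => (∏ l ∈ Icc 1 m, ((n l : ℝ) + k' l)) /
      (∏ l ∈ Icc 1 m, ((n l : ℝ) + k l)) * ((∏ l ∈ Icc (m + 1) (m + 1 + j), ((n l : ℝ) + k' l)) /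
      ∏ l ∈ Icc (m + 1) (m + 1 + j), (n l : ℝ))) atTop (nhds (t (m + 1))⁻¹) := by
    rw [← hkey, mul_inv, inv_div]
    refine (((ht' (m + 1)).inv₀ ht'm).const_mul _).congr fun j => ?_
    rw [prod_div_distrib, inv_div]
  obtain ⟨j₀, hj₀⟩ := hdvd m
  obtain ⟨j, hj, hj₀j⟩ := ((hlim.eventually (eventually_gt_nhds ((one_lt_inv₀ htm).2 htm1))).and
    (eventually_ge_atTop j₀)).exists
  refine ⟨m + 1, m + 1 + j + 1, by omega, by omega, by linarith, ?_, ?_⟩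
  · simp only [Nat.add_sub_cancel]
    exact hj₀.trans (prod_dvd_prod_of_subset _ _ _ (Icc_subset_Icc_right (by omega)))
  · simpa only [Nat.add_sub_cancel] using hj

/-- Lemma 4.5, `auto-close`, of the paper. Under the standing growth
condition, equality as supernatural numbers, and ratio convergence, the sequences
`(k^E_i)` and `(k^F_i)` are "sufficiently close" in the sense of Definition 4.4. -/
theorem villadsen_sufficiently_close
    (n kE kF : ℕ → ℕ)
    (hn : ∀ i, 1 ≤ i → 0 < n i) (hkE : ∀ i, 1 ≤ i → 0 < kE i) (hkF : ∀ i, 1 ≤ i → 0 < kF i)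
    (tE tF : ℕ → ℝ)
    (htE : ∀ i, Tendsto (fun j => ∏ l ∈ Finset.Icc i (i + j), (n l : ℝ) / ((n l : ℝ) + kE l))
      atTop (nhds (tE i)))
    (htF : ∀ i, Tendsto (fun j => ∏ l ∈ Finset.Icc i (i + j), (n l : ℝ) / ((n l : ℝ) + kF l))
      atTop (nhds (tF i)))
    (htE1 : Tendsto tE atTop (nhds 1)) (htF1 : Tendsto tF atTop (nhds 1))
    (hdivEF : ∀ i, ∃ j, (∏ l ∈ Finset.Icc 1 i, (n l + kE l)) ∣
      ∏ l ∈ Finset.Icc 1 j, (n l + kF l))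
    (hdivFE : ∀ i, ∃ j, (∏ l ∈ Finset.Icc 1 i, (n l + kF l)) ∣
      ∏ l ∈ Finset.Icc 1 j, (n l + kE l))
    (hratio : Tendsto (fun i =>
        (∏ l ∈ Finset.Icc 1 i, ((n l : ℝ) + kE l)) / ∏ l ∈ Finset.Icc 1 i, ((n l : ℝ) + kF l))
      atTop (nhds 1))
    (δ : ℝ) (hδ : 0 < δ) (N : ℕ) :
    (∃ i₁' i₁ : ℕ, N ≤ i₁' ∧ i₁' < i₁ ∧ 1 - tE i₁' < δ ∧
      ((∏ l ∈ Finset.Icc 1 (i₁' - 1), (n l + kE l)) ∣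
        ∏ l ∈ Finset.Icc 1 (i₁ - 1), (n l + kF l)) ∧
      1 < ((∏ l ∈ Finset.Icc 1 (i₁' - 1), ((n l : ℝ) + kF l)) /
            ∏ l ∈ Finset.Icc 1 (i₁' - 1), ((n l : ℝ) + kE l)) *
          ((∏ l ∈ Finset.Icc i₁' (i₁ - 1), ((n l : ℝ) + kF l)) /
            ∏ l ∈ Finset.Icc i₁' (i₁ - 1), (n l : ℝ))) ∧
    (∃ i₂' i₂ : ℕ, N ≤ i₂' ∧ i₂' < i₂ ∧ 1 - tF i₂' < δ ∧
      ((∏ l ∈ Finset.Icc 1 (i₂' - 1), (n l + kF l)) ∣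
        ∏ l ∈ Finset.Icc 1 (i₂ - 1), (n l + kE l)) ∧
      1 < ((∏ l ∈ Finset.Icc 1 (i₂' - 1), ((n l : ℝ) + kE l)) /
            ∏ l ∈ Finset.Icc 1 (i₂' - 1), ((n l : ℝ) + kF l)) *
          ((∏ l ∈ Finset.Icc i₂' (i₂ - 1), ((n l : ℝ) + kE l)) /
            ∏ l ∈ Finset.Icc i₂' (i₂ - 1), (n l : ℝ))) := by
  have hratio' := hratio.inv₀ one_ne_zero
  simp only [inv_div, inv_one] at hratio'
  exact ⟨sufficientlyCloseAt_of_tendsto n kE kF hn hkE tE tF htE htF htE1 hdivEF hratio hδ N,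
    sufficientlyCloseAt_of_tendsto n kF kE hn hkF tF tE htF htE htF1 hdivFE hratio' hδ N⟩
end
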